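/- Let q0 be a prime power, q = q0², and let t ≥ 1 be an integer. Let V ⊆ 𝔽_q[x,y] be the 𝔽_q-linear span of the monomials x^i y^j for 0 ≤ i ≤ q0-2 and 0 ≤ j ≤ t, and let C ⊆ 𝔽_q^H be the image of V under the map F ↦ (F(a,b))_{(a,b) ∈ H}, where H is the set of affine points of the Hermitian curve. Then for every F ∈ V and every b ∈ 𝔽_q there is a univariate polynomial f ∈ 𝔽_q[x] of degree at most q0-2 such that F(a,b) = f(a) for all a with a^{q0} + a = b^{q0+1}; consequently C has all-symbol locality q0 - 1, where the recovering set of the coordinate (a,b) ∈ H is {(a',b) ∈ H : a' ≠ a}. -/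

import Mathlib

/-!
On the line `y = b` a code polynomial `Σ cᵢⱼ xⁱ yʲ` with `i ≤ q0 - 2` becomes a univariate
polynomial in `x` of degree `≤ q0 - 2`. The points of the Hermitian curve on that line are the
`q0` solutions of `x ^ q0 + x = b ^ (q0 + 1)`, a fibre of the trace `F_{q0²} → F_{q0}`. Hence any
symbol is the value at its point of the interpolation polynomial through the other `q0 - 1`
points on its line.
-/

noncomputable section

/-- The evaluation map sending a bivariate polynomial `G ∈ F[x,y]` to the vector of its
values `(G(a,b))_{(a,b) ∈ S}`. -/
def evalMv {F : Type*} [CommSemiring F] (S : Finset (F × F)) :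
    MvPolynomial (Fin 2) F →ₗ[F] (S → F) :=
  LinearMap.pi fun p => (MvPolynomial.aeval ![(p : F × F).1, (p : F × F).2]).toLinearMap

open Finset Polynomial

section TraceFibres

variable {F : Type*} [Field F] [Fintype F] [DecidableEq F]

theorem card_filter_pow_add_mul_eq_zero_le {n : ℕ} (hn : 2 ≤ n) (c : F) :
    #{z : F | z ^ n + c * z = 0} ≤ n := by
  have hdeg : (X ^ n + C c * X : F[X]).natDegree = n := by
    rw [natDegree_add_eq_left_of_natDegree_lt] <;> rw [natDegree_X_pow]
    exact ((natDegree_C_mul_le c X).trans natDegree_X_le).trans_lt (by omega)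
  have hne : (X ^ n + C c * X : F[X]) ≠ 0 := by
    rintro h; rw [h, natDegree_zero] at hdeg; omega
  refine (card_le_degree_of_subset_roots fun z hz => ?_).trans hdeg.le
  simp only [Finset.mem_val, mem_filter, mem_univ, true_and] at hz
  simpa [mem_roots hne] using hz

theorem AddMonoidHom.card_eq_card_image_mul_card_ker {G M : Type*} [AddGroup G] [Fintype G]
    [AddMonoid M] [DecidableEq M] (T : G →+ M) :
    Fintype.card G = #(univ.image T) * #{g : G | T g = 0} := by
  rw [← card_univ, card_eq_sum_card_image T, ← smul_eq_mul, ← sum_const]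
  refine sum_congr rfl fun y hy => ?_
  obtain ⟨x, -, rfl⟩ := mem_image.mp hy
  exact AddMonoidHom.card_fiber_eq_of_mem_range T ⟨x, rfl⟩ ⟨0, map_zero T⟩

/-- `z ↦ z ^ q + z` is the trace of `F` over its subfield of order `q`: an additive map whose
kernel (at most `q` roots) and image (inside the `q` roots of `X ^ q - X`) must both have
exactly `q` elements, as their sizes multiply to `q ^ 2`. -/
theorem card_filter_pow_add_self_eq {p k : ℕ} [Fact p.Prime] [CharP F p] (hk : k ≠ 0)
    (hF : Fintype.card F = (p ^ k) ^ 2) (a : F) :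
    #{z : F | z ^ p ^ k + z = a ^ p ^ k + a} = p ^ k := by
  have hq : 2 ≤ p ^ k := (Nat.Prime.two_le Fact.out).trans (Nat.le_self_pow hk p)
  let T : F →+ F := (iterateFrobenius F p k : F →+* F).toAddMonoidHom + AddMonoidHom.id F
  have hT : ∀ z, T z = z ^ p ^ k + z := fun _ => rfl
  have hker : #{z : F | T z = 0} ≤ p ^ k := by
    simpa [hT] using card_filter_pow_add_mul_eq_zero_le hq (1 : F)
  have himage : #(univ.image T) ≤ p ^ k := by
    refine (card_le_card fun w hw => ?_).trans (card_filter_pow_add_mul_eq_zero_le hq (-1 : F))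
    obtain ⟨z, -, rfl⟩ := mem_image.mp hw
    have hz : z ^ (p ^ k) ^ 2 = z := hF ▸ FiniteField.pow_card z
    simp only [mem_filter, mem_univ, true_and, hT]
    rw [add_pow_char_pow, ← pow_mul, ← sq, hz]
    ring
  have hcard := T.card_eq_card_image_mul_card_ker
  rw [hF] at hcard
  have hker_eq : #{z : F | T z = 0} = p ^ k :=
    le_antisymm hker (le_of_mul_le_mul_left (by nlinarith) (by omega : 0 < p ^ k))
  exact (AddMonoidHom.card_fiber_eq_of_mem_range T ⟨a, rfl⟩ ⟨0, map_zero T⟩).trans hker_eq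

theorem card_filter_pow_add_self_eq_of_isPrimePow {q : ℕ} (hq : IsPrimePow q)
    (hF : Fintype.card F = q ^ 2) (a : F) : #{z : F | z ^ q + z = a ^ q + a} = q := by
  obtain ⟨p, k, hp, hk, rfl⟩ := hq
  have : Fact p.Prime := ⟨hp.nat_prime⟩
  have : CharP F p := charP_of_card_eq_prime_pow (hF.trans (pow_mul p k 2).symm)
  exact card_filter_pow_add_self_eq hk.ne' hF a

end TraceFibres

section LineRestriction

variable {R : Type*} [CommRing R]

def lineRestrict (b : R) : MvPolynomial (Fin 2) R →ₐ[R] R[X] :=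
  MvPolynomial.aeval ![X, C b]

theorem eval_lineRestrict (a b : R) (G : MvPolynomial (Fin 2) R) :
    (lineRestrict b G).eval a = MvPolynomial.eval ![a, b] G := by
  rw [← coe_aeval_eq_eval, lineRestrict, MvPolynomial.comp_aeval_apply,
    ← MvPolynomial.coe_aeval_eq_eval]
  refine congrArg (MvPolynomial.aeval · G) (funext fun i => ?_)
  fin_cases i <;> simp

theorem degree_lineRestrict_le {d : ℕ} (b : R) {G : MvPolynomial (Fin 2) R}
    (hG : G ∈ Submodule.span R
      {G | ∃ i j : ℕ, i ≤ d ∧ G = MvPolynomial.X 0 ^ i * MvPolynomial.X 1 ^ j}) :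
    (lineRestrict b G).degree ≤ d := by
  suffices h : Submodule.span R _ ≤ (degreeLE R d).comap (lineRestrict b).toLinearMap from
    mem_degreeLE.mp (h hG)
  refine Submodule.span_le.mpr ?_
  rintro _ ⟨i, j, hi, rfl⟩
  simp only [SetLike.mem_coe, Submodule.mem_comap, AlgHom.toLinearMap_apply, mem_degreeLE,
    lineRestrict, map_mul, map_pow, MvPolynomial.aeval_X]
  simp only [Matrix.cons_val_zero, Matrix.cons_val_one, ← C_pow, mul_comm (X ^ i)]
  exact (degree_C_mul_X_pow_le i _).trans (by exact_mod_cast hi)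

theorem evalMv_apply (S : Finset (R × R)) (G : MvPolynomial (Fin 2) R) (P : S) :
    evalMv S G P = MvPolynomial.eval ![(P : R × R).1, (P : R × R).2] G :=
  DFunLike.congr_fun (MvPolynomial.coe_aeval_eq_eval _) G

end LineRestriction

section EvaluationCode

variable {F : Type*} [Field F] [DecidableEq F]

theorem evalMv_apply_eq_of_eqOn_line {S : Finset (F × F)}
    {W : Submodule F (MvPolynomial (Fin 2) F)} {d : ℕ}
    (hW : ∀ G ∈ W, ∀ b : F, (lineRestrict b G).degree ≤ d) (P : S)
    (hP : d < #(S.filter fun p : F × F => p.2 = (P : F × F).2 ∧ p.1 ≠ (P : F × F).1))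
    {c c' : S → F} (hc : c ∈ W.map (evalMv S)) (hc' : c' ∈ W.map (evalMv S))
    (hagree : ∀ Q : S, (Q : F × F).2 = (P : F × F).2 → Q ≠ P → c Q = c' Q) : c P = c' P := by
  obtain ⟨⟨a, b⟩, hPS⟩ := P
  obtain ⟨G, hG, rfl⟩ := hc
  obtain ⟨G', hG', rfl⟩ := hc'
  set f := lineRestrict b (G - G')
  set s := (S.filter fun p : F × F => p.2 = b ∧ p.1 ≠ a).image Prod.fst
  have hs : #s = #(S.filter fun p : F × F => p.2 = b ∧ p.1 ≠ a) :=
    card_image_of_injOn fun p hp p' hp' h =>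
      Prod.ext h (((mem_filter.mp hp).2.1).trans (mem_filter.mp hp').2.1.symm)
  have hvanish : ∀ z ∈ s, f.eval z = 0 := by
    intro z hz
    obtain ⟨⟨z, y⟩, hp, rfl⟩ := mem_image.mp hz
    obtain ⟨hpS, rfl, hza⟩ := mem_filter.mp hp
    have := hagree ⟨(z, y), hpS⟩ rfl fun h => hza (congrArg (fun Q : S => (Q : F × F).1) h)
    simpa [f, eval_lineRestrict, evalMv_apply, sub_eq_zero] using this
  have hf : f = 0 := eq_zero_of_natDegree_lt_card_of_eval_eq_zero' f s hvanish
    (hs ▸ (natDegree_le_iff_degree_le.mpr (hW _ (sub_mem hG hG') b)).trans_lt hP)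
  rw [evalMv_apply, evalMv_apply, ← sub_eq_zero, ← map_sub, ← eval_lineRestrict]
  change f.eval a = 0
  rw [hf, eval_zero]

end EvaluationCode

theorem card_hermitian_line_erase {F : Type*} [Field F] [Fintype F] [DecidableEq F] {q : ℕ}
    (hq : IsPrimePow q) (hF : Fintype.card F = q ^ 2) {a b : F} (hab : a ^ q + a = b ^ (q + 1)) :
    #((univ.filter fun p : F × F => p.1 ^ q + p.1 = p.2 ^ (q + 1)).filter
      fun p => p.2 = b ∧ p.1 ≠ a) = q - 1 := by
  have hline : ((univ.filter fun p : F × F => p.1 ^ q + p.1 = p.2 ^ (q + 1)).filter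
      fun p => p.2 = b ∧ p.1 ≠ a) =
      (({z : F | z ^ q + z = a ^ q + a} : Finset F).erase a).map
        ⟨fun z => (z, b), Prod.mk_left_injective b⟩ := by
    ext ⟨x, y⟩
    simp only [mem_filter, mem_univ, true_and, mem_map, mem_erase, Function.Embedding.coeFn_mk,
      Prod.mk.injEq, hab]
    constructor
    · rintro ⟨hx, rfl, hxa⟩
      exact ⟨x, ⟨hxa, hx⟩, rfl, rfl⟩
    · rintro ⟨z, ⟨hza, hz⟩, rfl, rfl⟩
      exact ⟨hz, rfl, hza⟩
  rw [hline, card_map, card_erase_of_mem (by simp), card_filter_pow_add_self_eq_of_isPrimePow hq hF]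

theorem hermitian_lrc_locality_general
    (q0 t : ℕ) (hq0 : IsPrimePow q0)
    (F : Type*) [Field F] [Fintype F] [DecidableEq F] (hF : Fintype.card F = q0 ^ 2)
    (H : Finset (F × F))
    (hH : H = Finset.univ.filter fun p : F × F => p.1 ^ q0 + p.1 = p.2 ^ (q0 + 1))
    (V : Submodule F (MvPolynomial (Fin 2) F))
    (hV : V = Submodule.span F
      {p : MvPolynomial (Fin 2) F | ∃ i j : ℕ, i ≤ q0 - 2 ∧ j ≤ t ∧
        p = MvPolynomial.X 0 ^ i * MvPolynomial.X 1 ^ j})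
    (C : Submodule F (H → F)) (hC : C = Submodule.map (evalMv H) V) :
    (∀ G ∈ V, ∀ b : F, ∃ f : Polynomial F, f.degree ≤ ((q0 - 2 : ℕ) : WithBot ℕ) ∧
        ∀ a : F, a ^ q0 + a = b ^ (q0 + 1) → MvPolynomial.eval ![a, b] G = f.eval a) ∧
    (∀ P : H, (H.filter fun p : F × F => p.2 = (P : F × F).2 ∧ p.1 ≠ (P : F × F).1).card ≤ q0 - 1 ∧
        ∀ c ∈ C, ∀ c' ∈ C,
          (∀ Q : H, (Q : F × F).2 = (P : F × F).2 → Q ≠ P → c Q = c' Q) → c P = c' P) := by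
  have hrestrict : ∀ G ∈ V, ∀ b : F, (lineRestrict b G).degree ≤ ((q0 - 2 : ℕ) : WithBot ℕ) :=
    fun G hG b => degree_lineRestrict_le b <| Submodule.span_mono
      (by rintro _ ⟨i, j, hi, -, rfl⟩; exact ⟨i, j, hi, rfl⟩) (hV ▸ hG)
  refine ⟨fun G hG b => ⟨lineRestrict b G, hrestrict G hG b,
    fun a _ => (eval_lineRestrict a b G).symm⟩, fun P => ?_⟩
  subst hH
  have hcard := card_hermitian_line_erase hq0 hF (mem_filter.mp P.2).2
  refine ⟨hcard.le, fun c hc c' hc' => evalMv_apply_eq_of_eqOn_line hrestrict P ?_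
    (hC ▸ hc) (hC ▸ hc')⟩
  have := hq0.two_le
  omega

/-- On each fiber of the projection `(x,y) ↦ y`, every `G` in the Hermitian code space
`V = span{x^i y^j : i ≤ q0-2, j ≤ t}` agrees with a univariate polynomial of degree at
most `q0 - 2`; consequently the evaluation code `C` has all-symbol locality `q0 - 1`,
the recovering set of a coordinate `(a,b) ∈ H` being `{(a',b) ∈ H : a' ≠ a}`. -/
theorem hermitian_lrc_locality
    (q0 t : ℕ) (hq0 : IsPrimePow q0) (ht : 1 ≤ t)
    (F : Type*) [Field F] [Fintype F] [DecidableEq F] (hF : Fintype.card F = q0 ^ 2)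
    (H : Finset (F × F))
    (hH : H = Finset.univ.filter fun p : F × F => p.1 ^ q0 + p.1 = p.2 ^ (q0 + 1))
    (V : Submodule F (MvPolynomial (Fin 2) F))
    (hV : V = Submodule.span F
      {p : MvPolynomial (Fin 2) F | ∃ i j : ℕ, i ≤ q0 - 2 ∧ j ≤ t ∧
        p = MvPolynomial.X 0 ^ i * MvPolynomial.X 1 ^ j})
    (C : Submodule F (H → F)) (hC : C = Submodule.map (evalMv H) V) :
    (∀ G ∈ V, ∀ b : F, ∃ f : Polynomial F, f.degree ≤ ((q0 - 2 : ℕ) : WithBot ℕ) ∧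
        ∀ a : F, a ^ q0 + a = b ^ (q0 + 1) → MvPolynomial.eval ![a, b] G = f.eval a) ∧
    (∀ P : H, (H.filter fun p : F × F => p.2 = (P : F × F).2 ∧ p.1 ≠ (P : F × F).1).card ≤ q0 - 1 ∧
        ∀ c ∈ C, ∀ c' ∈ C,
          (∀ Q : H, (Q : F × F).2 = (P : F × F).2 → Q ≠ P → c Q = c' Q) → c P = c' P) :=
  hermitian_lrc_locality_general q0 t hq0 F hF H hH V hV C hC
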